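/- Let E be a finite set, w ≥ 1 an integer, e ∈ E and X ∈ (0,1]^E with all coordinates strictly positive. If |E\{e}| ≥ w, then z·R_e(zX) increases monotonically to Q_e(X) = (Σ_{S ⊆ E\{e}, |S| = w−1} X^S)/(Σ_{S ⊆ E\{e}, |S| = w} X^S) as z → ∞. If |E\{e}| < w, then z·R_e(zX) → ∞ as z → ∞. -/

import Mathlib

/-!
Write `a k` for the `k`-th elementary symmetric polynomial of `(X f)_{f ≠ e}` and
`p(z) = ∑_{k<w} a k z^k`. Then `R_e(zX) = p(z) / (p(z) + a w z^w)`. If `|E \ {e}| < w` then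
`a w = 0`, so `z R_e(zX) = z`. Otherwise `z R_e(zX) = z p(z) / (a 0 + z q(z))` with
`q(z) = ∑_{k<w} a (k+1) z^k`; it increases because `z p(z)` increases while `q / p` decreases,
the latter since `a (k+1) / a k` decreases (Newton's inequalities, proved by adjoining one
variable at a time). Comparing the leading terms `a (w-1) z^w` and `a w z^w` gives the limit.
-/

open scoped Classical

/-- `R_e(Y) = (Σ_{S ⊆ E\{e}, |S| ≤ w−1} Y^S) / (Σ_{S ⊆ E\{e}, |S| ≤ w} Y^S)`. -/
noncomputable def Re {α : Type*} [DecidableEq α] (E : Finset α) (w : ℕ) (e : α)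
    (Y : α → ℝ) : ℝ :=
  (∑ S ∈ (E.erase e).powerset.filter (fun S => S.card ≤ w - 1), ∏ f ∈ S, Y f) /
  (∑ S ∈ (E.erase e).powerset.filter (fun S => S.card ≤ w), ∏ f ∈ S, Y f)

/-- `Q_e(X) = (Σ_{S ⊆ E\{e}, |S| = w−1} X^S)/(Σ_{S ⊆ E\{e}, |S| = w} X^S)`. -/
noncomputable def Qe {α : Type*} [DecidableEq α] (E : Finset α) (w : ℕ) (e : α)
    (X : α → ℝ) : ℝ :=
  (∑ S ∈ (E.erase e).powerset.filter (fun S => S.card = w - 1), ∏ f ∈ S, X f) /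
  (∑ S ∈ (E.erase e).powerset.filter (fun S => S.card = w), ∏ f ∈ S, X f)

open Finset Filter Topology Asymptotics

/-- `a (k + 1) / a k` is antitone, in cross-multiplied form. -/
def RatioAntitone (a : ℕ → ℝ) : Prop :=
  ∀ ⦃i j : ℕ⦄, i ≤ j → a i * a (j + 1) ≤ a (i + 1) * a j

lemma pow_mul_pow_le_pow_mul_pow {z₁ z₂ : ℝ} (h₀ : 0 ≤ z₁) (h₁₂ : z₁ ≤ z₂) {i j : ℕ}
    (hij : i ≤ j) : z₂ ^ i * z₁ ^ j ≤ z₁ ^ i * z₂ ^ j := by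
  obtain ⟨d, rfl⟩ := Nat.exists_eq_add_of_le hij
  have h₂ : 0 ≤ z₂ := h₀.trans h₁₂
  calc z₂ ^ i * z₁ ^ (i + d) = z₁ ^ i * z₂ ^ i * z₁ ^ d := by ring
    _ ≤ z₁ ^ i * z₂ ^ i * z₂ ^ d := by gcongr
    _ = z₁ ^ i * z₂ ^ (i + d) := by ring

lemma sum_sum_nonpos_of_add_swap_nonpos {ι : Type*} (s : Finset ι) {f : ι → ι → ℝ}
    (h : ∀ i j, f i j + f j i ≤ 0) : ∑ i ∈ s, ∑ j ∈ s, f i j ≤ 0 := by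
  have hswap : ∑ i ∈ s, ∑ j ∈ s, f j i = ∑ i ∈ s, ∑ j ∈ s, f i j := sum_comm
  have hsym : ∑ i ∈ s, ∑ j ∈ s, (f i j + f j i) ≤ 0 :=
    sum_nonpos fun i _ => sum_nonpos fun j _ => h i j
  simp only [sum_add_distrib] at hsym
  rw [hswap] at hsym
  linarith

namespace RatioAntitone

variable {a : ℕ → ℝ}

lemma mul_add_two_le (h : RatioAntitone a) {i j : ℕ} (hij : i ≤ j) :
    a i * a (j + 2) ≤ a (i + 2) * a j := by
  rcases hij.eq_or_lt with rfl | hlt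
  · rw [mul_comm]
  · exact (h (by omega : i ≤ j + 1)).trans (h (by omega : i + 1 ≤ j))

/-- `b` is the coefficient sequence of `(1 + t X) * ∑ a k X^k`. -/
lemma of_add_mul_shift {b : ℕ → ℝ} (ha : ∀ k, 0 ≤ a k) (h : RatioAntitone a) {t : ℝ}
    (ht : 0 ≤ t) (hb0 : b 0 = a 0) (hb : ∀ k, b (k + 1) = a (k + 1) + t * a k) :
    RatioAntitone b := by
  rintro (_ | i) (_ | j) hij
  · exact (mul_comm _ _).le
  · simp only [hb0, hb, zero_add]
    have h0 := h (Nat.zero_le (j + 1))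
    nlinarith [mul_nonneg ht (mul_nonneg (ha 1) (ha j)),
      mul_nonneg (mul_nonneg ht ht) (mul_nonneg (ha 0) (ha j))]
  · omega
  · have hij : i ≤ j := by omega
    simp only [hb]
    nlinarith [h (Nat.succ_le_succ hij), mul_le_mul_of_nonneg_left (h.mul_add_two_le hij) ht,
      mul_le_mul_of_nonneg_left (h hij) (mul_nonneg ht ht)]

lemma sum_mul_sum_shift_le (h : RatioAntitone a) {z₁ z₂ : ℝ} (h₀ : 0 ≤ z₁) (h₁₂ : z₁ ≤ z₂)
    (n : ℕ) :
    (∑ k ∈ range n, a k * z₁ ^ k) * ∑ k ∈ range n, a (k + 1) * z₂ ^ k ≤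
      (∑ k ∈ range n, a k * z₂ ^ k) * ∑ k ∈ range n, a (k + 1) * z₁ ^ k := by
  set f : ℕ → ℕ → ℝ := fun i j => a i * a (j + 1) * (z₁ ^ i * z₂ ^ j - z₂ ^ i * z₁ ^ j)
  have hdiff : (∑ k ∈ range n, a k * z₁ ^ k) * (∑ k ∈ range n, a (k + 1) * z₂ ^ k) -
      (∑ k ∈ range n, a k * z₂ ^ k) * (∑ k ∈ range n, a (k + 1) * z₁ ^ k) =
      ∑ i ∈ range n, ∑ j ∈ range n, f i j := by
    simp only [sum_mul_sum, ← sum_sub_distrib]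
    exact sum_congr rfl fun i _ => sum_congr rfl fun j _ => by ring
  -- after symmetrizing, each pair `(i, j), (j, i)` is a product of two factors of opposite signs
  have hpair : ∀ i j, f i j + f j i ≤ 0 := by
    intro i j
    have hfactor : f i j + f j i =
        (a i * a (j + 1) - a (i + 1) * a j) * (z₁ ^ i * z₂ ^ j - z₂ ^ i * z₁ ^ j) := by ring
    rw [hfactor]
    rcases le_total i j with hij | hji
    · exact mul_nonpos_of_nonpos_of_nonneg (sub_nonpos.2 (h hij))
        (sub_nonneg.2 (pow_mul_pow_le_pow_mul_pow h₀ h₁₂ hij))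
    · exact mul_nonpos_of_nonneg_of_nonpos (by linarith [h hji])
        (by linarith [pow_mul_pow_le_pow_mul_pow h₀ h₁₂ hji])
  linarith [sum_sum_nonpos_of_add_swap_nonpos (range n) hpair]

end RatioAntitone

lemma sum_mul_pow_monotoneOn {a : ℕ → ℝ} (ha : ∀ k, 0 ≤ a k) (n : ℕ) :
    MonotoneOn (fun z : ℝ => ∑ k ∈ range n, a k * z ^ k) (Set.Ici 0) :=
  fun _ hz₁ _ _ h₁₂ => sum_le_sum fun k _ => by gcongr; exact ha k

lemma monotoneOn_mul_sum_div_sum {a : ℕ → ℝ} (ha : ∀ k, 0 ≤ a k) (ha₀ : 0 < a 0)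
    (h : RatioAntitone a) (n : ℕ) :
    MonotoneOn (fun z : ℝ => z * ((∑ k ∈ range n, a k * z ^ k) /
      ∑ k ∈ range (n + 1), a k * z ^ k)) (Set.Ici 0) := by
  set p : ℝ → ℝ := fun z => ∑ k ∈ range n, a k * z ^ k
  set q : ℝ → ℝ := fun z => ∑ k ∈ range n, a (k + 1) * z ^ k
  have hden : ∀ z : ℝ, ∑ k ∈ range (n + 1), a k * z ^ k = a 0 + z * q z := fun z => by
    rw [sum_range_succ', mul_sum, add_comm, pow_zero, mul_one]
    exact congrArg (a 0 + ·) (sum_congr rfl fun k _ => by ring)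
  have hden_pos : ∀ z : ℝ, 0 ≤ z → 0 < a 0 + z * q z := fun z hz =>
    add_pos_of_pos_of_nonneg ha₀
      (mul_nonneg hz (sum_nonneg fun k _ => mul_nonneg (ha (k + 1)) (pow_nonneg hz k)))
  intro z₁ hz₁ z₂ hz₂ h₁₂
  simp only [Set.mem_Ici] at hz₁ hz₂
  simp only [hden, mul_div_assoc']
  rw [div_le_div_iff₀ (hden_pos z₁ hz₁) (hden_pos z₂ hz₂)]
  have hp : z₁ * p z₁ ≤ z₂ * p z₂ :=
    mul_le_mul h₁₂ (sum_mul_pow_monotoneOn ha n hz₁ hz₂ h₁₂)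
      (sum_nonneg fun k _ => mul_nonneg (ha k) (pow_nonneg hz₁ k)) hz₂
  have hpq : p z₁ * q z₂ ≤ p z₂ * q z₁ := h.sum_mul_sum_shift_le hz₁ h₁₂ n
  nlinarith [mul_le_mul_of_nonneg_left hpq (mul_nonneg hz₁ hz₂)]

lemma isLittleO_sum_range_mul_pow (c : ℕ → ℝ) (n : ℕ) :
    (fun z : ℝ => ∑ k ∈ range n, c k * z ^ k) =o[atTop] fun z => z ^ n :=
  IsLittleO.fun_sum fun k hk =>
    (isLittleO_pow_pow_atTop_of_lt (mem_range.1 hk)).const_mul_left (c k)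

lemma tendsto_sum_range_succ_mul_pow_div_pow (c : ℕ → ℝ) (n : ℕ) :
    Tendsto (fun z : ℝ => (∑ k ∈ range (n + 1), c k * z ^ k) / z ^ n) atTop (𝓝 (c n)) := by
  have hlim := (isLittleO_sum_range_mul_pow c n).tendsto_div_nhds_zero.add_const (c n)
  rw [zero_add] at hlim
  refine hlim.congr' ?_
  filter_upwards [eventually_ne_atTop 0] with z hz
  rw [sum_range_succ, add_div, mul_div_assoc, div_self (pow_ne_zero n hz), mul_one]

lemma tendsto_mul_sum_div_sum (c : ℕ → ℝ) (m : ℕ) (hc : c (m + 1) ≠ 0) :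
    Tendsto (fun z : ℝ => z * ((∑ k ∈ range (m + 1), c k * z ^ k) /
      ∑ k ∈ range (m + 2), c k * z ^ k)) atTop (𝓝 (c m / c (m + 1))) := by
  refine ((tendsto_sum_range_succ_mul_pow_div_pow c m).div
    (tendsto_sum_range_succ_mul_pow_div_pow c (m + 1)) hc).congr' ?_
  filter_upwards [eventually_ne_atTop 0] with z hz
  simp only [Pi.div_apply]
  rw [div_div_div_eq, pow_succ]
  field_simp

namespace Multiset

variable {R : Type*}

lemma esymm_cons_succ [CommSemiring R] (x : R) (s : Multiset R) (n : ℕ) :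
    (x ::ₘ s).esymm (n + 1) = s.esymm (n + 1) + x * s.esymm n := by
  simp [esymm, powersetCard_cons, prod_cons, sum_map_mul_left]

@[simp]
lemma esymm_zero [CommSemiring R] (s : Multiset R) : s.esymm 0 = 1 := by
  simp [esymm]

lemma esymm_eq_zero_of_card_lt [CommSemiring R] {s : Multiset R} {n : ℕ} (h : card s < n) :
    s.esymm n = 0 := by
  simp [esymm, powersetCard_eq_empty _ h]

lemma esymm_nonneg [CommSemiring R] [PartialOrder R] [IsOrderedRing R] {s : Multiset R}
    (hs : ∀ x ∈ s, 0 ≤ x) (n : ℕ) : 0 ≤ s.esymm n :=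
  sum_nonneg fun _ hy => by
    obtain ⟨t, ht, rfl⟩ := mem_map.1 hy
    exact prod_nonneg fun x hx => hs x (mem_of_le (mem_powersetCard.1 ht).1 hx)

lemma ratioAntitone_esymm {s : Multiset ℝ} (hs : ∀ x ∈ s, 0 ≤ x) :
    RatioAntitone s.esymm := by
  induction s using Multiset.induction_on with
  | empty =>
    intro i j _
    rw [esymm_eq_zero_of_card_lt (n := j + 1) (by simp), mul_zero]
    exact mul_nonneg (esymm_nonneg (by simp) _) (esymm_nonneg (by simp) _)
  | cons x s ih =>
    have hs' : ∀ y ∈ s, 0 ≤ y := fun y hy => hs y (mem_cons_of_mem hy)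
    exact (ih hs').of_add_mul_shift (esymm_nonneg hs') (hs x (mem_cons_self x s))
      (by simp only [esymm_zero]) (esymm_cons_succ x s)

end Multiset

lemma Finset.esymm_map_val_pos {α : Type*} {F : Finset α} {X : α → ℝ} (hX : ∀ f ∈ F, 0 < X f)
    {n : ℕ} (hn : n ≤ F.card) : 0 < (F.val.map X).esymm n := by
  rw [esymm_map_val]
  exact sum_pos (fun S hS => prod_pos fun f hf => hX f ((mem_powersetCard.1 hS).1 hf))
    (powersetCard_nonempty.2 hn)

lemma Finset.sum_filter_card_le_prod_mul {α : Type*} (F : Finset α) (X : α → ℝ) (c : ℕ)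
    (z : ℝ) :
    ∑ S ∈ F.powerset.filter (fun S => S.card ≤ c), ∏ f ∈ S, z * X f =
      ∑ k ∈ range (c + 1), (F.val.map X).esymm k * z ^ k := by
  rw [← sum_fiberwise_of_maps_to (g := card) (t := range (c + 1))
    (fun S hS => mem_range.2 (Nat.lt_succ_of_le (mem_filter.1 hS).2))]
  refine sum_congr rfl fun k hk => ?_
  have hkc : k ≤ c := Nat.lt_succ_iff.1 (mem_range.1 hk)
  rw [esymm_map_val, sum_mul, filter_filter]
  refine sum_congr ?_ fun S hS => ?_
  · ext S
    simp only [mem_filter, mem_powerset, mem_powersetCard]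
    constructor
    · exact fun h => ⟨h.1, h.2.2⟩
    · exact fun h => ⟨h.1, h.2 ▸ hkc, h.2⟩
  · rw [prod_mul_distrib, prod_const, (mem_powersetCard.1 hS).2, mul_comm]

lemma Re_mul_eq_div_sum_esymm {α : Type*} [DecidableEq α] (E : Finset α) {w : ℕ} (hw : 1 ≤ w) (e : α)
    (X : α → ℝ) (z : ℝ) :
    Re E w e (fun a => z * X a) = (∑ k ∈ range w, ((E.erase e).val.map X).esymm k * z ^ k) /
      ∑ k ∈ range (w + 1), ((E.erase e).val.map X).esymm k * z ^ k := by
  rw [Re, sum_filter_card_le_prod_mul, sum_filter_card_le_prod_mul, Nat.sub_add_cancel hw]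

lemma Qe_eq_div_esymm {α : Type*} [DecidableEq α] (E : Finset α) (w : ℕ) (e : α) (X : α → ℝ) :
    Qe E w e X = ((E.erase e).val.map X).esymm (w - 1) / ((E.erase e).val.map X).esymm w := by
  rw [Qe, ← powersetCard_eq_filter, ← powersetCard_eq_filter, esymm_map_val, esymm_map_val]

theorem statement_9_general {α : Type*} [DecidableEq α] (E : Finset α) (w : ℕ) (hw : 1 ≤ w)
    (e : α) (X : α → ℝ) (hX : ∀ a ∈ E, 0 < X a ∧ X a ≤ 1) :
    (w ≤ (E.erase e).card →
      MonotoneOn (fun z : ℝ => z * Re E w e (fun a => z * X a)) (Set.Ici 0) ∧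
      Filter.Tendsto (fun z : ℝ => z * Re E w e (fun a => z * X a))
        Filter.atTop (nhds (Qe E w e X))) ∧
    ((E.erase e).card < w →
      Filter.Tendsto (fun z : ℝ => z * Re E w e (fun a => z * X a))
        Filter.atTop Filter.atTop) := by
  set s := (E.erase e).val.map X
  have hpos : ∀ f ∈ E.erase e, 0 < X f := fun f hf => (hX f (mem_of_mem_erase hf)).1
  have hs : ∀ x ∈ s, 0 ≤ x := by
    simp only [s, Multiset.mem_map]
    rintro _ ⟨f, hf, rfl⟩
    exact (hpos f hf).le
  simp only [Re_mul_eq_div_sum_esymm E hw]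
  refine ⟨fun hcard => ⟨?_, ?_⟩, fun hcard => ?_⟩
  · exact monotoneOn_mul_sum_div_sum (Multiset.esymm_nonneg hs)
      (by simp) (Multiset.ratioAntitone_esymm hs) w
  · obtain ⟨m, rfl⟩ := Nat.exists_eq_add_of_le' hw
    rw [Qe_eq_div_esymm, Nat.add_sub_cancel]
    exact tendsto_mul_sum_div_sum _ m (esymm_map_val_pos hpos hcard).ne'
  · have hzero : s.esymm w = 0 :=
      Multiset.esymm_eq_zero_of_card_lt (by rw [Multiset.card_map]; exact hcard)
    refine tendsto_id.congr' ?_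
    filter_upwards [eventually_gt_atTop 0] with z hz
    have hp : 0 < ∑ k ∈ range w, s.esymm k * z ^ k :=
      sum_pos' (fun k _ => mul_nonneg (Multiset.esymm_nonneg hs k) (pow_nonneg hz.le k))
        ⟨0, mem_range.2 hw, by simp⟩
    rw [sum_range_succ, hzero, zero_mul, add_zero, div_self hp.ne', mul_one, id]

/-- If `|E\{e}| ≥ w`, then `z·R_e(zX)` increases monotonically to `Q_e(X)` as `z → ∞`;
if `|E\{e}| < w`, then `z·R_e(zX) → ∞` as `z → ∞`. -/
theorem statement_9 {α : Type*} [DecidableEq α] (E : Finset α) (w : ℕ) (hw : 1 ≤ w)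
    (e : α) (he : e ∈ E) (X : α → ℝ) (hX : ∀ a ∈ E, 0 < X a ∧ X a ≤ 1) :
    (w ≤ (E.erase e).card →
      MonotoneOn (fun z : ℝ => z * Re E w e (fun a => z * X a)) (Set.Ici 0) ∧
      Filter.Tendsto (fun z : ℝ => z * Re E w e (fun a => z * X a))
        Filter.atTop (nhds (Qe E w e X))) ∧
    ((E.erase e).card < w →
      Filter.Tendsto (fun z : ℝ => z * Re E w e (fun a => z * X a))
        Filter.atTop Filter.atTop) :=
  statement_9_general E w hw e X hX
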